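/- arXiv:1204.4547 — 2 statements merged into one kernel-verified Lean document; each statement's English description precedes it below -/
import Mathlib

section
/- Let n ≥ 3 and let I be a nonempty proper nested subset of [n]. If D_I = {δ_1, δ_4} (i.e. exactly δ_1 and δ_4 among the four diagonals are proper), then either (a) u_1 < d_2 and I = {1, u_1}, or (b) d_{ℓ−1} < u_m and I = {u_m, n}; here d_2 is the second smallest element of D, d_{ℓ−1} the second largest element of D, u_1 = min U and u_m = max U. -/
/-!
The diagonals `δ₂ = {a, Γ}` and `δ₃ = {γ, b}` are boundary edges whose outer endpoints
`a, b ∈ D̄` are not up elements. Hence `δ₂` is a pair of consecutive elements of `D̄` or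
`{0, u₁}`, and `δ₃` is a pair of consecutive elements of `D̄` or `{u_m, n+1}`. Both
consecutive is impossible, since `γ ∈ D̄` lies strictly between `a` and `Γ`; `{0, u₁}`
together with `{u_m, n+1}` contradicts `γ < Γ`. In a mixed case, say `δ₂ = {0, u₁}`, the equality
`a = 0` forces `γ = 1`, and no element of `[n]` lies strictly between `1` and `u₁` (down
elements there would lie between the consecutive `γ` and `b`), so `I = {1, u₁}`.
-/

open Finset

attribute [local instance] Classical.propDecidable

namespace AssocPaper

/-- `x` and `y` are consecutive elements of the finite set `S`. -/
def ConsecIn (S : Finset ℕ) (x y : ℕ) : Prop :=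
  x ∈ S ∧ y ∈ S ∧ x < y ∧ ∀ z ∈ S, ¬ (x < z ∧ z < y)

/-- `D̄ = D ∪ {0, n+1}`. -/
def Dbar (n : ℕ) (D : Finset ℕ) : Finset ℕ := insert 0 (insert (n + 1) D)

/-- The boundary edges of the `c`-labeled `(n+2)`-gon, given by endpoints `x < y`:
pairs of consecutive elements of `D̄`; if `U ≠ ∅` also `{0, min U}`, `{max U, n+1}` and
pairs of consecutive elements of `U`; if `U = ∅` also `{0, n+1}`. -/
def IsBoundary (n : ℕ) (D U : Finset ℕ) (x y : ℕ) : Prop :=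
  ConsecIn (Dbar n D) x y
    ∨ (U.Nonempty ∧
        ((x = 0 ∧ y ∈ U ∧ ∀ u ∈ U, y ≤ u)
          ∨ (y = n + 1 ∧ x ∈ U ∧ ∀ u ∈ U, u ≤ x)
          ∨ ConsecIn U x y))
    ∨ (U = ∅ ∧ x = 0 ∧ y = n + 1)

/-- `{x, y}` (with `x < y ≤ n+1`) is a proper diagonal: a diagonal of the
`(n+2)`-gon which is not a boundary edge. -/
def IsProper (n : ℕ) (D U : Finset ℕ) (x y : ℕ) : Prop :=
  x < y ∧ y ≤ n + 1 ∧ ¬ IsBoundary n D U x y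

/-- The set `R_δ` for a proper diagonal `δ = {x,y}` with `x < y`. -/
noncomputable def Rdiag (n : ℕ) (D U : Finset ℕ) (x y : ℕ) : Finset ℕ :=
  if x ∈ U then
    (if y ∈ U then (D ∪ U.filter fun u => u ≤ x) ∪ U.filter fun u => y ≤ u
     else D.filter (fun d => d < y) ∪ U.filter fun u => u ≤ x)
  else
    (if y ∈ U then D.filter (fun d => x < d) ∪ U.filter fun u => y ≤ u
     else D.filter fun d => x < d ∧ d < y)

/-- The extension of `R` to non-proper and degenerate diagonals `δ = {x,y}`, `x ≤ y`:
`R_δ = [n]` if `U = ∅` and `δ = {0,n+1}`; for other non-proper or degenerate `δ`,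
`R_δ = ∅` if `x,y ∈ D̄` and `R_δ = [n]` otherwise. -/
noncomputable def Rext (n : ℕ) (D U : Finset ℕ) (x y : ℕ) : Finset ℕ :=
  if IsProper n D U x y then Rdiag n D U x y
  else if U = ∅ ∧ x = 0 ∧ y = n + 1 then Finset.Icc 1 n
  else if x ∈ U ∨ y ∈ U then Finset.Icc 1 n
  else ∅

/-- The extension of the right-hand sides `z_{R_δ}` to non-proper and degenerate
diagonals, given the values `w` on proper diagonals and the value `zn = z_{[n]}`. -/
noncomputable def zext (n : ℕ) (D U : Finset ℕ) (w : ℕ × ℕ → ℝ) (zn : ℝ) (x y : ℕ) : ℝ :=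
  if IsProper n D U x y then w (x, y)
  else if U = ∅ ∧ x = 0 ∧ y = n + 1 then zn
  else if x ∈ U ∨ y ∈ U then zn
  else 0

/-- `a(I)`: the largest element of `D ∪ {0}` smaller than `min I`. -/
noncomputable def aI (D I : Finset ℕ) : ℕ :=
  ((insert 0 D).filter fun e => ∀ i ∈ I, e < i).sup id

/-- `b(I)`: the smallest element of `D ∪ {n+1}` larger than `max I`. -/
noncomputable def bI (n : ℕ) (D I : Finset ℕ) : ℕ :=
  sInf {e : ℕ | e ∈ insert (n + 1) D ∧ ∀ i ∈ I, i < e}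

/-- The minimum element `γ` of `I` (junk value for `I = ∅`). -/
noncomputable def minEl (I : Finset ℕ) : ℕ := sInf {i : ℕ | i ∈ I}

/-- The maximum element `Γ` of `I` (junk value `0` for `I = ∅`). -/
noncomputable def maxEl (I : Finset ℕ) : ℕ := I.sup id

/-- A nonempty `I ⊆ [n]` is nested if every `d ∈ D` with `a(I) < d < b(I)` lies in `I`. -/
def IsNested (n : ℕ) (D I : Finset ℕ) : Prop :=
  I.Nonempty ∧ I ⊆ Finset.Icc 1 n ∧
    ∀ d ∈ D, aI D I < d → d < bI n D I → d ∈ I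

/-- The nested components of `I`: the inclusion-maximal nested subsets of `I`. -/
noncomputable def nestedComponents (n : ℕ) (D I : Finset ℕ) : Finset (Finset ℕ) :=
  I.powerset.filter fun J =>
    IsNested n D J ∧ ∀ K ∈ I.powerset, IsNested n D K → J ⊆ K → J = K

/-- `v(I)`: the number of nested components of `I`. -/
noncomputable def vI (n : ℕ) (D I : Finset ℕ) : ℕ := (nestedComponents n D I).card

/-- `x` is the last element of one of the up intervals of `J`
(an element of `J ∩ U` whose successor in `U`, if any, is not in `J`). -/
def IsRunEnd (U J : Finset ℕ) (x : ℕ) : Prop :=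
  x ∈ J ∧ x ∈ U ∧ ∀ y, ConsecIn U x y → y ∉ J

/-- `y` is the first element of one of the up intervals of `J`
(an element of `J ∩ U` whose predecessor in `U`, if any, is not in `J`). -/
def IsRunStart (U J : Finset ℕ) (y : ℕ) : Prop :=
  y ∈ J ∧ y ∈ U ∧ ∀ x, ConsecIn U x y → x ∉ J

/-- `{x,y}` is one of the diagonals `δ_1(J), …, δ_{w+1}(J)` associated to a nested
set `J` with `a = a(J)`, `b = b(J)` and up intervals `[α_1,β_1]_U, …, [α_w,β_w]_U`,
namely `{a,α_1}, {β_1,α_2}, …, {β_w,b}` (and `{a,b}` when `w = 0`). -/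
def AssocDiag (n : ℕ) (D U J : Finset ℕ) (x y : ℕ) : Prop :=
  x < y ∧ (x = aI D J ∨ IsRunEnd U J x) ∧ (y = bI n D J ∨ IsRunStart U J y) ∧
    ∀ u ∈ J ∩ U, ¬ (x < u ∧ u < y)

/-- `W(J)`: the proper diagonals among the diagonals associated to the nested set `J`. -/
noncomputable def WJ (n : ℕ) (D U J : Finset ℕ) : Finset (ℕ × ℕ) :=
  (Finset.range (n + 2) ×ˢ Finset.range (n + 2)).filter fun p =>
    AssocDiag n D U J p.1 p.2 ∧ IsProper n D U p.1 p.2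

/-- The tight value `z^c_I = ∑_i ( ∑_{j ∈ W(J_i)} w_{δ_j(J_i)} − (|W(J_i)|−1)·z_{[n]} )`,
the sum running over the nested components `J_i` of `I` (so `z^c_∅ = 0`). -/
noncomputable def zc (n : ℕ) (D U : Finset ℕ) (w : ℕ × ℕ → ℝ) (zn : ℝ) (I : Finset ℕ) : ℝ :=
  ∑ J ∈ nestedComponents n D I,
    ((∑ p ∈ WJ n D U J, w p) - (((WJ n D U J).card : ℝ) - 1) * zn)

/-- The Minkowski coefficient `y_I = ∑_{J ⊆ I} (−1)^{|I∖J|} z^c_J`. -/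
noncomputable def yI (n : ℕ) (D U : Finset ℕ) (w : ℕ × ℕ → ℝ) (zn : ℝ) (I : Finset ℕ) : ℝ :=
  ∑ J ∈ I.powerset, (-1 : ℝ) ^ (I \ J).card * zc n D U w zn J

/-- The associahedron right-hand sides `w_δ = |R_δ|·(|R_δ|+1)/2`. -/
noncomputable def wAs (n : ℕ) (D U : Finset ℕ) (p : ℕ × ℕ) : ℝ :=
  (((Rdiag n D U p.1 p.2).card : ℝ) * (((Rdiag n D U p.1 p.2).card : ℝ) + 1)) / 2

/-- The associahedron value `z_{[n]} = n(n+1)/2`. -/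
noncomputable def znAs (n : ℕ) : ℝ := ((n : ℝ) * ((n : ℝ) + 1)) / 2

lemma minEl_mem {I : Finset ℕ} (h : I.Nonempty) : minEl I ∈ I :=
  Nat.sInf_mem h

lemma minEl_le {I : Finset ℕ} {i : ℕ} (hi : i ∈ I) : minEl I ≤ i :=
  Nat.sInf_le hi

lemma le_maxEl {I : Finset ℕ} {i : ℕ} (hi : i ∈ I) : i ≤ maxEl I :=
  le_sup (f := id) hi

lemma maxEl_mem {I : Finset ℕ} (h : I.Nonempty) : maxEl I ∈ I := by
  obtain ⟨i, hi, hsup⟩ := exists_mem_eq_sup I h id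
  rwa [maxEl, hsup]

lemma ConsecIn.le_of_lt_right {S : Finset ℕ} {x y z : ℕ} (h : ConsecIn S x y) (hz : z ∈ S)
    (hzy : z < y) : z ≤ x :=
  not_lt.1 fun hxz => h.2.2.2 z hz ⟨hxz, hzy⟩

lemma ConsecIn.le_of_lt_left {S : Finset ℕ} {x y z : ℕ} (h : ConsecIn S x y) (hz : z ∈ S)
    (hxz : x < z) : y ≤ z :=
  not_lt.1 fun hzy => h.2.2.2 z hz ⟨hxz, hzy⟩

lemma eq_pair_of_forall_not_between {S I : Finset ℕ} {x y : ℕ} (hIS : I ⊆ S)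
    (hx : x ∈ I) (hy : y ∈ I) (hI : ∀ i ∈ I, x ≤ i ∧ i ≤ y)
    (hS : ∀ s ∈ S, ¬ (x < s ∧ s < y)) :
    I = {x, y} := by
  ext i
  simp only [mem_insert, mem_singleton]
  refine ⟨fun hi => ?_, by rintro (rfl | rfl) <;> assumption⟩
  have := hI i hi
  have := hS i (hIS hi)
  omega

section

variable {n : ℕ} {D U I : Finset ℕ}

lemma aI_mem (hsub : I ⊆ Icc 1 n) : aI D I ∈ insert 0 D ∧ ∀ i ∈ I, aI D I < i := by
  have h0 : 0 ∈ (insert 0 D).filter fun e => ∀ i ∈ I, e < i :=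
    mem_filter.2 ⟨mem_insert_self 0 D, fun i hi => (mem_Icc.1 (hsub hi)).1⟩
  obtain ⟨e, he, hsup⟩ := exists_mem_eq_sup _ ⟨0, h0⟩ (id : ℕ → ℕ)
  rw [aI, hsup]
  exact mem_filter.1 he

lemma aI_lt (hsub : I ⊆ Icc 1 n) {i : ℕ} (hi : i ∈ I) : aI D I < i :=
  (aI_mem hsub).2 i hi

lemma le_aI {e : ℕ} (he : e ∈ insert 0 D) (h : ∀ i ∈ I, e < i) : e ≤ aI D I :=
  le_sup (f := id) (mem_filter.2 ⟨he, h⟩)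

lemma bI_mem (hsub : I ⊆ Icc 1 n) : bI n D I ∈ insert (n + 1) D ∧ ∀ i ∈ I, i < bI n D I :=
  Nat.sInf_mem (s := {e | e ∈ insert (n + 1) D ∧ ∀ i ∈ I, i < e})
    ⟨n + 1, mem_insert_self _ _, fun _ hi => Nat.lt_succ_of_le (mem_Icc.1 (hsub hi)).2⟩

lemma lt_bI (hsub : I ⊆ Icc 1 n) {i : ℕ} (hi : i ∈ I) : i < bI n D I :=
  (bI_mem hsub).2 i hi

lemma bI_le {e : ℕ} (he : e ∈ insert (n + 1) D) (h : ∀ i ∈ I, i < e) : bI n D I ≤ e :=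
  Nat.sInf_le ⟨he, h⟩

lemma bI_le_succ (hsub : I ⊆ Icc 1 n) : bI n D I ≤ n + 1 :=
  bI_le (mem_insert_self _ _) fun _ hi => Nat.lt_succ_of_le (mem_Icc.1 (hsub hi)).2

lemma aI_notMem (hdisj : Disjoint D U) (h0 : 0 ∉ U) (hsub : I ⊆ Icc 1 n) : aI D I ∉ U := by
  rcases mem_insert.1 (aI_mem (D := D) hsub).1 with ha | ha
  · rwa [ha]
  · exact disjoint_left.1 hdisj ha

lemma bI_notMem (hdisj : Disjoint D U) (hn : n + 1 ∉ U) (hsub : I ⊆ Icc 1 n) :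
    bI n D I ∉ U := by
  rcases mem_insert.1 (bI_mem (D := D) hsub).1 with hb | hb
  · rwa [hb]
  · exact disjoint_left.1 hdisj hb

lemma minEl_eq_one_of_aI_eq_zero (h1D : 1 ∈ D) (hsub : I ⊆ Icc 1 n) (hne : I.Nonempty)
    (ha : aI D I = 0) : minEl I = 1 := by
  have hγ := (mem_Icc.1 (hsub (minEl_mem hne))).1
  by_contra hγ1
  have : 1 ≤ aI D I :=
    le_aI (mem_insert_of_mem h1D) fun i hi => (by omega : 1 < minEl I).trans_le (minEl_le hi)
  omega

lemma maxEl_eq_of_bI_eq_succ (hnD : n ∈ D) (hsub : I ⊆ Icc 1 n) (hne : I.Nonempty)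
    (hb : bI n D I = n + 1) : maxEl I = n := by
  have hΓ := (mem_Icc.1 (hsub (maxEl_mem hne))).2
  by_contra hΓn
  have : bI n D I ≤ n :=
    bI_le (mem_insert_of_mem hnD) fun i hi => (le_maxEl hi).trans_lt (by omega)
  omega

lemma IsBoundary.cases_of_notMem_left {x y : ℕ} (hB : IsBoundary n D U x y) (hx : x ∉ U)
    (hy : y ∈ Icc 1 n) :
    ConsecIn (Dbar n D) x y ∨ (x = 0 ∧ y ∈ U ∧ ∀ u ∈ U, y ≤ u) := by
  have := mem_Icc.1 hy
  rcases hB with h | ⟨-, h | ⟨hy', -⟩ | h⟩ | ⟨-, -, hy'⟩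
  · exact Or.inl h
  · exact Or.inr h
  · omega
  · exact absurd h.1 hx
  · omega

lemma IsBoundary.cases_of_notMem_right {x y : ℕ} (hB : IsBoundary n D U x y) (hy : y ∉ U)
    (hx : x ∈ Icc 1 n) :
    ConsecIn (Dbar n D) x y ∨ (y = n + 1 ∧ x ∈ U ∧ ∀ u ∈ U, u ≤ x) := by
  have := mem_Icc.1 hx
  rcases hB with h | ⟨-, ⟨hx', -⟩ | h | h⟩ | ⟨-, hx', -⟩
  · exact Or.inl h
  · omega
  · exact Or.inr h
  · exact absurd h.2.1 hy
  · omega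

lemma exists_min_up_of_aI_eq_zero (hDU : D ∪ U = Icc 1 n) (h1D : 1 ∈ D)
    (hsub : I ⊆ Icc 1 n) (hne : I.Nonempty) (ha : aI D I = 0)
    (hcons : ConsecIn (Dbar n D) (minEl I) (bI n D I))
    (hΓU : maxEl I ∈ U) (hΓmin : ∀ u ∈ U, maxEl I ≤ u) :
    ∃ u1, u1 ∈ U ∧ (∀ u ∈ U, u1 ≤ u) ∧ (∀ d ∈ D, 1 < d → u1 < d) ∧ I = {1, u1} := by
  have hγ : minEl I = 1 := minEl_eq_one_of_aI_eq_zero h1D hsub hne ha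
  have hDabove : ∀ d ∈ D, 1 < d → maxEl I < d := fun d hd h1d =>
    (lt_bI hsub (maxEl_mem hne)).trans_le
      (hcons.le_of_lt_left (by simp [Dbar, hd]) (hγ ▸ h1d))
  refine ⟨maxEl I, hΓU, hΓmin, hDabove, ?_⟩
  rw [← hγ]
  refine eq_pair_of_forall_not_between (hDU ▸ hsub) (minEl_mem hne) (maxEl_mem hne)
    (fun i hi => ⟨minEl_le hi, le_maxEl hi⟩) ?_
  rintro s hs ⟨hγs, hsΓ⟩
  rcases mem_union.1 hs with hd | hu
  · exact (hDabove s hd (hγ ▸ hγs)).not_gt hsΓ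
  · exact (hΓmin s hu).not_gt hsΓ

lemma exists_max_up_of_bI_eq_succ (hDU : D ∪ U = Icc 1 n) (hnD : n ∈ D)
    (hsub : I ⊆ Icc 1 n) (hne : I.Nonempty) (hb : bI n D I = n + 1)
    (hcons : ConsecIn (Dbar n D) (aI D I) (maxEl I))
    (hγU : minEl I ∈ U) (hγmax : ∀ u ∈ U, u ≤ minEl I) :
    ∃ um, um ∈ U ∧ (∀ u ∈ U, u ≤ um) ∧ (∀ d ∈ D, d < n → d < um) ∧ I = {um, n} := by
  have hΓ : maxEl I = n := maxEl_eq_of_bI_eq_succ hnD hsub hne hb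
  have hDbelow : ∀ d ∈ D, d < n → d < minEl I := fun d hd hdn =>
    (hcons.le_of_lt_right (by simp [Dbar, hd]) (hΓ ▸ hdn)).trans_lt
      (aI_lt hsub (minEl_mem hne))
  refine ⟨minEl I, hγU, hγmax, hDbelow, ?_⟩
  rw [← hΓ]
  refine eq_pair_of_forall_not_between (hDU ▸ hsub) (minEl_mem hne) (maxEl_mem hne)
    (fun i hi => ⟨minEl_le hi, le_maxEl hi⟩) ?_
  rintro s hs ⟨hγs, hsΓ⟩
  rcases mem_union.1 hs with hd | hu
  · exact (hDbelow s hd (hΓ ▸ hsΓ)).not_gt hγs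
  · exact (hγmax s hu).not_gt hγs

end

theorem statement15_general (n : ℕ) (D U : Finset ℕ)
    (hDU : D ∪ U = Finset.Icc 1 n) (hdisj : Disjoint D U) (h1D : 1 ∈ D) (hnD : n ∈ D)
    (I : Finset ℕ) (hne : I.Nonempty) (hsub : I ⊆ Finset.Icc 1 n)
    (h2 : ¬ IsProper n D U (aI D I) (maxEl I))
    (h3 : ¬ IsProper n D U (minEl I) (bI n D I))
    (h4 : IsProper n D U (minEl I) (maxEl I)) :
    (∃ u1, u1 ∈ U ∧ (∀ u ∈ U, u1 ≤ u) ∧ (∀ d ∈ D, 1 < d → u1 < d) ∧ I = {1, u1})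
    ∨ (∃ um, um ∈ U ∧ (∀ u ∈ U, u ≤ um) ∧ (∀ d ∈ D, d < n → d < um) ∧ I = {um, n}) := by
  have hU : U ⊆ Icc 1 n := hDU ▸ subset_union_right
  have hγ : minEl I ∈ Icc 1 n := hsub (minEl_mem hne)
  have hΓ : maxEl I ∈ Icc 1 n := hsub (maxEl_mem hne)
  have hδ₂ : IsBoundary n D U (aI D I) (maxEl I) := by
    by_contra hB
    exact h2 ⟨aI_lt hsub (maxEl_mem hne), by simp at hΓ; omega, hB⟩
  have hδ₃ : IsBoundary n D U (minEl I) (bI n D I) := by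
    by_contra hB
    exact h3 ⟨lt_bI hsub (minEl_mem hne), bI_le_succ hsub, hB⟩
  have haU := aI_notMem (D := D) hdisj (fun h => by simpa using hU h) hsub
  have hbU := bI_notMem (D := D) hdisj (fun h => by simpa using hU h) hsub
  rcases hδ₂.cases_of_notMem_left haU hΓ with hc₂ | ⟨ha, hΓU, hΓmin⟩ <;>
    rcases hδ₃.cases_of_notMem_right hbU hγ with hc₃ | ⟨hb, hγU, hγmax⟩
  · exact absurd ⟨aI_lt hsub (minEl_mem hne), h4.1⟩ (hc₂.2.2.2 _ hc₃.1)
  · exact Or.inr (exists_max_up_of_bI_eq_succ hDU hnD hsub hne hb hc₂ hγU hγmax)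
  · exact Or.inl (exists_min_up_of_aI_eq_zero hDU h1D hsub hne ha hc₃ hΓU hΓmin)
  · exact absurd (hΓmin _ hγU) h4.1.not_ge

/-- for `n ≥ 3` and a nonempty proper nested `I ⊆ [n]`, if among
`δ_1, δ_2, δ_3, δ_4` exactly `δ_1` and `δ_4` are proper, then either
`u_1 < d_2` and `I = {1, u_1}`, or `d_{ℓ−1} < u_m` and `I = {u_m, n}`. -/
theorem statement15 (n : ℕ) (D U : Finset ℕ) (hn : 3 ≤ n)
    (hDU : D ∪ U = Finset.Icc 1 n) (hdisj : Disjoint D U) (h1D : 1 ∈ D) (hnD : n ∈ D)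
    (I : Finset ℕ) (hne : I.Nonempty) (hsub : I ⊆ Finset.Icc 1 n)
    (hpropersub : I ≠ Finset.Icc 1 n) (hnested : IsNested n D I)
    (h1 : IsProper n D U (aI D I) (bI n D I))
    (h2 : ¬ IsProper n D U (aI D I) (maxEl I))
    (h3 : ¬ IsProper n D U (minEl I) (bI n D I))
    (h4 : IsProper n D U (minEl I) (maxEl I)) :
    (∃ u1, u1 ∈ U ∧ (∀ u ∈ U, u1 ≤ u) ∧ (∀ d ∈ D, 1 < d → u1 < d) ∧ I = {1, u1})
    ∨ (∃ um, um ∈ U ∧ (∀ u ∈ U, u ≤ um) ∧ (∀ d ∈ D, d < n → d < um) ∧ I = {um, n}) :=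
  statement15_general n D U hDU hdisj h1D hnD I hne hsub h2 h3 h4

end AssocPaper
end

section
/- Let n ≥ 3 and let I be a nonempty proper nested subset of [n]. If D_I = {δ_2, δ_3} (i.e. exactly δ_2 and δ_3 among the four diagonals are proper), then either (a) I = {u_s} for some 1 ≤ s ≤ m, or (b) I = {u_s, u_{s+1}} for some 1 ≤ s < m, where U = {u_1 < ⋯ < u_m}. -/
/-!
The ends `a(I)`, `b(I)` of `δ_1` lie in `D̄`, so `δ_1` can only be a boundary edge by joining
two consecutive elements of `D̄`, or by being `{0, n+1}` with `U = ∅`. In the second case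
nestedness puts all of `D = [n]` into `I`, which is excluded; in the first no down element lies
strictly between `a(I)` and `b(I)`, so `I ⊆ U`. Then both ends of `δ_4 = {min I, max I}` are up
elements, so `δ_4` is improper only if it is degenerate or joins consecutive elements of `U`.
-/


open Finset

attribute [local instance] Classical.propDecidable

namespace AssocPaper

lemma maxEl_eq_max' {I : Finset ℕ} (hI : I.Nonempty) : maxEl I = I.max' hI :=
  (sup'_eq_sup hI id).symm

lemma minEl_eq_min' {I : Finset ℕ} (hI : I.Nonempty) : minEl I = I.min' hI :=
  le_antisymm (Nat.sInf_le (I.min'_mem hI)) (I.min'_le _ (Nat.sInf_mem ⟨_, I.min'_mem hI⟩))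

lemma eq_singleton_of_min'_eq_max' {α : Type*} [LinearOrder α] {s : Finset α} (hs : s.Nonempty)
    (h : s.min' hs = s.max' hs) : s = {s.min' hs} :=
  eq_singleton_iff_unique_mem.2
    ⟨s.min'_mem hs, fun x hx => le_antisymm (h ▸ s.le_max' x hx) (s.min'_le x hx)⟩

lemma aI_mem_and_lt {D I : Finset ℕ} (hI : ∀ i ∈ I, 0 < i) :
    aI D I ∈ insert 0 D ∧ ∀ i ∈ I, aI D I < i := by
  have hne : ((insert 0 D).filter fun e => ∀ i ∈ I, e < i).Nonempty :=
    ⟨0, mem_filter.2 ⟨mem_insert_self _ _, hI⟩⟩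
  rw [aI, ← sup'_eq_sup hne, ← max'_eq_sup']
  exact mem_filter.1 (max'_mem _ hne)

lemma bI_mem_and_lt {n : ℕ} {D I : Finset ℕ} (hI : ∀ i ∈ I, i ≤ n) :
    bI n D I ∈ insert (n + 1) D ∧ ∀ i ∈ I, i < bI n D I :=
  Nat.sInf_mem (s := {e | e ∈ insert (n + 1) D ∧ ∀ i ∈ I, i < e})
    ⟨n + 1, mem_insert_self _ _, fun i hi => Nat.lt_succ_of_le (hI i hi)⟩

lemma bI_le_s16 {n : ℕ} {D I : Finset ℕ} (hI : ∀ i ∈ I, i ≤ n) : bI n D I ≤ n + 1 :=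
  Nat.sInf_le (s := {e | e ∈ insert (n + 1) D ∧ ∀ i ∈ I, i < e})
    ⟨mem_insert_self _ _, fun i hi => Nat.lt_succ_of_le (hI i hi)⟩

lemma eq_pair_of_consecIn_min'_max' {S I : Finset ℕ} (hI : I.Nonempty) (hIS : I ⊆ S)
    (h : ConsecIn S (I.min' hI) (I.max' hI)) : I = {I.min' hI, I.max' hI} := by
  ext x
  simp only [mem_insert, mem_singleton]
  refine ⟨fun hx => ?_, by rintro (rfl | rfl) <;> simp [min'_mem, max'_mem]⟩
  by_contra hx'
  push Not at hx'
  exact h.2.2.2 x (hIS hx)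
    ⟨(I.min'_le x hx).lt_of_ne (Ne.symm hx'.1), (I.le_max' x hx).lt_of_ne hx'.2⟩

section Boundary

variable {n : ℕ} {D U : Finset ℕ} {x y : ℕ}

lemma IsBoundary.consecIn_dbar_of_notMem (h : IsBoundary n D U x y) (hx : x ∉ U) (hy : y ∉ U) :
    ConsecIn (Dbar n D) x y ∨ (U = ∅ ∧ x = 0 ∧ y = n + 1) := by
  rcases h with h | ⟨-, ⟨-, hyU, -⟩ | ⟨-, hxU, -⟩ | h⟩ | h
  exacts [.inl h, (hy hyU).elim, (hx hxU).elim, (hx h.1).elim, .inr h]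

lemma notMem_of_mem_dbar (hdisj : Disjoint D U) (hU : U ⊆ Icc 1 n) (hx : x ∈ Dbar n D) :
    x ∉ U := by
  intro hxU
  have := mem_Icc.1 (hU hxU)
  rcases mem_insert.1 hx with rfl | hx
  · omega
  rcases mem_insert.1 hx with rfl | hxD
  · omega
  exact disjoint_left.1 hdisj hxD hxU

lemma IsBoundary.consecIn_of_mem (h : IsBoundary n D U x y) (hdisj : Disjoint D U)
    (hU : U ⊆ Icc 1 n) (hx : x ∈ U) (hy : y ∈ U) : ConsecIn U x y := by
  have hx' := mem_Icc.1 (hU hx)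
  have hy' := mem_Icc.1 (hU hy)
  rcases h with h | ⟨-, ⟨rfl, -⟩ | ⟨rfl, -⟩ | h⟩ | ⟨rfl, -⟩
  · exact (notMem_of_mem_dbar hdisj hU h.1 hx).elim
  · omega
  · omega
  · exact h
  · exact (notMem_empty x hx).elim

lemma isBoundary_of_not_isProper (h : ¬ IsProper n D U x y) (hxy : x < y) (hy : y ≤ n + 1) :
    IsBoundary n D U x y :=
  not_not.1 fun hb => h ⟨hxy, hy, hb⟩

end Boundary

lemma subset_up_of_not_isProper_aI_bI {n : ℕ} {D U I : Finset ℕ}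
    (hDU : D ∪ U = Icc 1 n) (hdisj : Disjoint D U) (hIn : I ≠ Icc 1 n) (hI : IsNested n D I)
    (h : ¬ IsProper n D U (aI D I) (bI n D I)) : I ⊆ U := by
  obtain ⟨⟨i₀, hi₀⟩, hsub, hnest⟩ := hI
  have hIpos : ∀ i ∈ I, 0 < i := fun i hi => (mem_Icc.1 (hsub hi)).1
  have hIle : ∀ i ∈ I, i ≤ n := fun i hi => (mem_Icc.1 (hsub hi)).2
  obtain ⟨haD, hlta⟩ := aI_mem_and_lt (D := D) hIpos
  obtain ⟨hbD, hltb⟩ := bI_mem_and_lt (D := D) hIle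
  have hUsub : U ⊆ Icc 1 n := hDU ▸ subset_union_right
  have haU : aI D I ∉ U :=
    notMem_of_mem_dbar hdisj hUsub (by simp only [Dbar, mem_insert] at haD ⊢; tauto)
  have hbU : bI n D I ∉ U :=
    notMem_of_mem_dbar hdisj hUsub (by simp only [Dbar, mem_insert] at hbD ⊢; tauto)
  have hbd := isBoundary_of_not_isProper h ((hlta i₀ hi₀).trans (hltb i₀ hi₀)) (bI_le_s16 hIle)
  rcases hbd.consecIn_dbar_of_notMem haU hbU with hc | ⟨hU, ha, hb⟩
  · intro i hi
    rcases mem_union.1 (hDU ▸ hsub hi) with hiD | hiU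
    · exact (hc.2.2.2 i (by simp [Dbar, hiD]) ⟨hlta i hi, hltb i hi⟩).elim
    · exact hiU
  · refine (hIn (hsub.antisymm fun d hd => hnest d ?_ ?_ ?_)).elim
    · have hd' : d ∈ D ∪ U := hDU ▸ hd
      simpa [hU] using hd'
    · have := (mem_Icc.1 hd).1; omega
    · have := (mem_Icc.1 hd).2; omega

theorem statement16_general (n : ℕ) (D U : Finset ℕ)
    (hDU : D ∪ U = Finset.Icc 1 n) (hdisj : Disjoint D U)
    (I : Finset ℕ)
    (hpropersub : I ≠ Finset.Icc 1 n) (hnested : IsNested n D I)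
    (h1 : ¬ IsProper n D U (aI D I) (bI n D I))
    (h4 : ¬ IsProper n D U (minEl I) (maxEl I)) :
    (∃ u ∈ U, I = {u}) ∨ (∃ u u', ConsecIn U u u' ∧ I = {u, u'}) := by
  have hne := hnested.1
  have hIU := subset_up_of_not_isProper_aI_bI hDU hdisj hpropersub hnested h1
  rw [minEl_eq_min' hne, maxEl_eq_max' hne] at h4
  rcases (I.min'_le _ (I.max'_mem hne)).eq_or_lt with heq | hlt
  · exact .inl ⟨_, hIU (I.min'_mem hne), eq_singleton_of_min'_eq_max' hne heq⟩
  · have hmax := (mem_Icc.1 (hnested.2.1 (I.max'_mem hne))).2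
    have hcon := (isBoundary_of_not_isProper h4 hlt (by omega)).consecIn_of_mem hdisj
      (hDU ▸ subset_union_right) (hIU (I.min'_mem hne)) (hIU (I.max'_mem hne))
    exact .inr ⟨_, _, hcon, eq_pair_of_consecIn_min'_max' hne hIU hcon⟩

/-- for `n ≥ 3` and a nonempty proper nested `I ⊆ [n]`, if among
`δ_1, δ_2, δ_3, δ_4` exactly `δ_2` and `δ_3` are proper, then `I = {u}` for some
`u ∈ U`, or `I = {u, u'}` for consecutive elements `u < u'` of `U`. -/
theorem statement16 (n : ℕ) (D U : Finset ℕ) (hn : 3 ≤ n)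
    (hDU : D ∪ U = Finset.Icc 1 n) (hdisj : Disjoint D U) (h1D : 1 ∈ D) (hnD : n ∈ D)
    (I : Finset ℕ) (hne : I.Nonempty) (hsub : I ⊆ Finset.Icc 1 n)
    (hpropersub : I ≠ Finset.Icc 1 n) (hnested : IsNested n D I)
    (h1 : ¬ IsProper n D U (aI D I) (bI n D I))
    (h2 : IsProper n D U (aI D I) (maxEl I))
    (h3 : IsProper n D U (minEl I) (bI n D I))
    (h4 : ¬ IsProper n D U (minEl I) (maxEl I)) :
    (∃ u ∈ U, I = {u}) ∨ (∃ u u', ConsecIn U u u' ∧ I = {u, u'}) :=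
  statement16_general n D U hDU hdisj I hpropersub hnested h1 h4

end AssocPaper
end
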